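/- arXiv:1704.04145 — 2 statements merged into one kernel-verified Lean document; each statement's English description precedes it below -/
import Mathlib

section
/- Let G be a finite simple graph with no isolated vertices that is (C3, C6)-free (i.e., contains no induced triangle and no induced 6-cycle). Then γt(G) = 2γ(G) if and only if sup(G), the set of support vertices of G, is both a packing and a dominating set of G. -/
open SimpleGraph

namespace TotalDom

variable {V : Type*}

/-- The closed neighborhood `N[v]` of a vertex. -/
def cnbr (G : SimpleGraph V) (v : V) : Set V := insert v (G.neighborSet v)

/-- `S` is a dominating set: every vertex outside `S` has a neighbor in `S`. -/
def IsDomSet (G : SimpleGraph V) (S : Set V) : Prop := ∀ v ∉ S, ∃ u ∈ S, G.Adj u v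

/-- `S` is a total dominating set: every vertex has a neighbor in `S`. -/
def IsTotalDomSet (G : SimpleGraph V) (S : Set V) : Prop := ∀ v : V, ∃ u ∈ S, G.Adj u v

/-- The domination number `γ(G)`. -/
noncomputable def domNum (G : SimpleGraph V) : ℕ :=
  sInf {n | ∃ S : Set V, IsDomSet G S ∧ S.ncard = n}

/-- The total domination number `γₜ(G)`. -/
noncomputable def totalDomNum (G : SimpleGraph V) : ℕ :=
  sInf {n | ∃ S : Set V, IsTotalDomSet G S ∧ S.ncard = n}

/-- A minimum dominating set (γ-set). -/
def IsMinDomSet (G : SimpleGraph V) (S : Set V) : Prop := IsDomSet G S ∧ S.ncard = domNum G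

/-- `S` is a packing: closed neighborhoods of distinct members are disjoint. -/
def IsPacking (G : SimpleGraph V) (S : Set V) : Prop :=
  S.Pairwise fun u v => Disjoint (cnbr G u) (cnbr G v)

/-- `M(v)`: neighbors of `v` having a neighbor outside `N[v]`. -/
def Mset (G : SimpleGraph V) (v : V) : Set V :=
  {u | G.Adj v u ∧ ∃ w, G.Adj u w ∧ w ∉ cnbr G v}

/-- `D(v)`: neighbors `u` of `v` that are not true twins of `v` with `N[u] ⊆ N[v]`. -/
def Dset (G : SimpleGraph V) (v : V) : Set V :=
  {u | G.Adj v u ∧ cnbr G u ≠ cnbr G v ∧ cnbr G u ⊆ cnbr G v}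

/-- `T(v)`: `v` together with its true twins. -/
def Tset (G : SimpleGraph V) (v : V) : Set V := {u | cnbr G u = cnbr G v}

/-- A non-isolated vertex `v` is special if no `u ∈ M(v)` satisfies `D(v) ⊆ N(u)`. -/
def Special (G : SimpleGraph V) (v : V) : Prop :=
  (G.neighborSet v).Nonempty ∧ ¬ ∃ u ∈ Mset G v, Dset G v ⊆ G.neighborSet u

/-- An `S(G)`-set: a set of special vertices containing exactly one vertex from each
true-twin equivalence class of special vertices. -/
def IsSGSet (G : SimpleGraph V) (S : Set V) : Prop :=
  (∀ u ∈ S, Special G u) ∧ ∀ v, Special G v → ∃! u, u ∈ S ∧ u ∈ Tset G v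

/-- `G` has no isolated vertices. -/
def NoIsolated (G : SimpleGraph V) : Prop := ∀ v : V, ∃ u, G.Adj v u

/-- `G` contains no induced copy of `H`. -/
def Free {α : Type*} (H : SimpleGraph α) (G : SimpleGraph V) : Prop := IsEmpty (H ↪g G)

/-- `H₁`: a 6-cycle plus one chord between vertices at distance two along the cycle. -/
def H1 : SimpleGraph (Fin 6) := cycleGraph 6 ⊔ fromEdgeSet {s(0, 2)}

/-- `H₂`: a 6-cycle `x₁x₂x₃x₄x₅x₆` plus the chords `x₂x₆` and `x₃x₅`. -/
def H2 : SimpleGraph (Fin 6) := cycleGraph 6 ⊔ fromEdgeSet {s(1, 5), s(2, 4)}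

/-- A leaf: a vertex of degree one. -/
def IsLeaf (G : SimpleGraph V) (v : V) : Prop := ∃! u, G.Adj v u

/-- A support vertex: a vertex adjacent to a leaf. -/
def IsSupport (G : SimpleGraph V) (v : V) : Prop := ∃ u, G.Adj v u ∧ IsLeaf G u

/-- `sup(G)`: the set of support vertices. -/
def supSet (G : SimpleGraph V) : Set V := {v | IsSupport G v}

/-- `S` is the set of support vertices of `G`, using the convention that in a `K₂` component
exactly one of the two vertices is regarded as the support vertex (the other as the leaf):
every member of `S` is a support vertex, every support vertex that is not itself a leaf
belongs to `S`, and of two adjacent leaves exactly one belongs to `S`. -/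
def IsSupportChoice (G : SimpleGraph V) (S : Set V) : Prop :=
  (∀ v ∈ S, IsSupport G v) ∧
  (∀ v, IsSupport G v → ¬ IsLeaf G v → v ∈ S) ∧
  (∀ v u, G.Adj v u → IsLeaf G u → IsLeaf G v → (v ∈ S ↔ u ∉ S))

/-! If `sup(G)` is a dominating packing, then `γ(G) = |sup(G)|`, while every total dominating
set contains `sup(G)` together with a private neighbour of each support vertex, so
`γₜ(G) = 2|sup(G)|`. Conversely, if `γₜ(G) = 2γ(G)`, then every γ-set `D` is a packing (two
members with intersecting closed neighbourhoods would save a vertex in the total dominating set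
`D ∪ {one neighbour of each vertex of D}`), and some γ-set contains `sup(G)`. If a vertex `d` of
such a γ-set were not a support vertex, each other `v ∈ D` has a neighbour `z_v` adjacent to
every neighbour of `d` at distance two from `v` (the neighbour maximising its common neighbours
with `d`; otherwise a triangle or an induced `C₆` appears). Since no neighbour of `d` is a leaf,
`(D \ {d}) ∪ {z_v} ∪ {one neighbour of d}` is then a total dominating set of size `2γ(G) - 1`. -/

section Basic

variable {G : SimpleGraph V}

lemma mem_cnbr {v x : V} : x ∈ cnbr G v ↔ x = v ∨ G.Adj v x := Set.mem_insert_iff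

lemma self_mem_cnbr (G : SimpleGraph V) (v : V) : v ∈ cnbr G v := Set.mem_insert v _

lemma mem_cnbr_of_adj {v x : V} (h : G.Adj v x) : x ∈ cnbr G v := Set.mem_insert_of_mem _ h

lemma mem_cnbr_comm {v x : V} : x ∈ cnbr G v ↔ v ∈ cnbr G x := by
  simp only [mem_cnbr, eq_comm, G.adj_comm]

lemma isDomSet_iff_forall_exists_mem_cnbr {S : Set V} :
    IsDomSet G S ↔ ∀ x, ∃ s ∈ S, x ∈ cnbr G s := by
  refine ⟨fun hS x => ?_, fun hS x hx => ?_⟩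
  · by_cases hx : x ∈ S
    · exact ⟨x, hx, self_mem_cnbr G x⟩
    · obtain ⟨s, hs, hsx⟩ := hS x hx
      exact ⟨s, hs, mem_cnbr_of_adj hsx⟩
  · obtain ⟨s, hs, hxs⟩ := hS x
    rcases mem_cnbr.mp hxs with rfl | hsx
    · exact (hx hs).elim
    · exact ⟨s, hs, hsx⟩

lemma IsLeaf.eq_of_adj {l a b : V} (hl : IsLeaf G l) (ha : G.Adj l a) (hb : G.Adj l b) :
    a = b :=
  hl.unique ha hb

lemma IsSupportChoice.notMem_of_adj_of_isLeaf {S : Set V} (hS : IsSupportChoice G S)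
    {s l : V} (hs : s ∈ S) (hsl : G.Adj s l) (hl : IsLeaf G l) : l ∉ S := by
  intro hlS
  obtain ⟨u, hlu, hu⟩ := hS.1 l hlS
  obtain rfl : u = s := hl.eq_of_adj hlu hsl.symm
  exact (hS.2.2 u l hsl hl hu).mp hs hlS

lemma IsSupportChoice.exists_cnbr_subset {S : Set V} (hS : IsSupportChoice G S) {d : V}
    (hd : IsSupport G d) (hdS : d ∉ S) : ∃ s ∈ S, cnbr G d ⊆ cnbr G s := by
  obtain ⟨l, hdl, hl⟩ := hd
  have hdleaf : IsLeaf G d := by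
    by_contra h
    exact hdS (hS.2.1 d ⟨l, hdl, hl⟩ h)
  have hlS : l ∈ S := by
    by_contra h
    exact hdS ((hS.2.2 d l hdl hl hdleaf).mpr h)
  refine ⟨l, hlS, fun x hx => ?_⟩
  rcases mem_cnbr.mp hx with rfl | hdx
  · exact mem_cnbr_of_adj hdl.symm
  · rw [hdleaf.eq_of_adj hdx hdl]
    exact self_mem_cnbr G l

lemma Free.not_adj_of_adj_of_adj (hC3 : Free (cycleGraph 3) G) {a b c : V}
    (hab : G.Adj a b) (hbc : G.Adj b c) : ¬ G.Adj a c := by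
  intro hac
  refine hC3.elim ⟨⟨![a, b, c], fun i j hij => ?_⟩, fun {i j} => ?_⟩
  · fin_cases i <;> fin_cases j <;> simp_all
  · change G.Adj (![a, b, c] i) (![a, b, c] j) ↔ _
    fin_cases i <;> fin_cases j <;> simp_all [cycleGraph_adj, G.adj_comm] <;> decide

lemma Free.false_of_hexagon (hC6 : Free (cycleGraph 6) G) {x₀ x₁ x₂ x₃ x₄ x₅ : V}
    (h₀₁ : G.Adj x₀ x₁) (h₁₂ : G.Adj x₁ x₂) (h₂₃ : G.Adj x₂ x₃)
    (h₃₄ : G.Adj x₃ x₄) (h₄₅ : G.Adj x₄ x₅) (h₅₀ : G.Adj x₅ x₀)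
    (n₀₂ : x₂ ∉ cnbr G x₀) (n₀₃ : x₃ ∉ cnbr G x₀) (n₀₄ : x₄ ∉ cnbr G x₀)
    (n₁₃ : x₃ ∉ cnbr G x₁) (n₁₄ : x₄ ∉ cnbr G x₁) (n₁₅ : x₅ ∉ cnbr G x₁)
    (n₂₄ : x₄ ∉ cnbr G x₂) (n₂₅ : x₅ ∉ cnbr G x₂) (n₃₅ : x₅ ∉ cnbr G x₃) : False := by
  simp only [mem_cnbr, not_or] at n₀₂ n₀₃ n₀₄ n₁₃ n₁₄ n₁₅ n₂₄ n₂₅ n₃₅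
  refine hC6.elim ⟨⟨![x₀, x₁, x₂, x₃, x₄, x₅], fun i j hij => ?_⟩, fun {i j} => ?_⟩
  · fin_cases i <;> fin_cases j <;> simp_all
  · change G.Adj (![x₀, x₁, x₂, x₃, x₄, x₅] i) (![x₀, x₁, x₂, x₃, x₄, x₅] j) ↔ _
    fin_cases i <;> fin_cases j <;> simp_all [cycleGraph_adj, G.adj_comm] <;> decide

end Basic

section Numbers

variable {G : SimpleGraph V}

lemma domNum_le {A : Set V} (hA : IsDomSet G A) : domNum G ≤ A.ncard :=
  Nat.sInf_le ⟨A, hA, rfl⟩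

lemma totalDomNum_le {A : Set V} (hA : IsTotalDomSet G A) : totalDomNum G ≤ A.ncard :=
  Nat.sInf_le ⟨A, hA, rfl⟩

lemma exists_isMinDomSet (G : SimpleGraph V) : ∃ D, IsMinDomSet G D :=
  Nat.sInf_mem (s := {n | ∃ S : Set V, IsDomSet G S ∧ S.ncard = n})
    ⟨_, Set.univ, fun _ hv => (hv trivial).elim, rfl⟩

lemma exists_isTotalDomSet_ncard_eq (hiso : NoIsolated G) :
    ∃ T, IsTotalDomSet G T ∧ T.ncard = totalDomNum G :=
  Nat.sInf_mem (s := {n | ∃ S : Set V, IsTotalDomSet G S ∧ S.ncard = n})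
    ⟨_, Set.univ, fun v => (hiso v).imp fun _ hu => ⟨trivial, hu.symm⟩, rfl⟩

variable [Finite V]

lemma IsPacking.ncard_le {P D : Set V} (hP : IsPacking G P) (hD : IsDomSet G D) :
    P.ncard ≤ D.ncard := by
  have hdom : ∀ p, ∃ q ∈ D, q ∈ cnbr G p := fun p =>
    (isDomSet_iff_forall_exists_mem_cnbr.mp hD p).imp fun _ ⟨hq, hpq⟩ => ⟨hq, mem_cnbr_comm.mp hpq⟩
  choose g hgD hg using hdom
  refine Set.ncard_le_ncard_of_injOn g (fun p _ => hgD p) (fun p hp p' hp' he => ?_)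
  by_contra hne
  exact Set.disjoint_left.mp (hP hp hp' hne) (hg p) (he ▸ hg p')

lemma totalDomNum_le_two_mul (hiso : NoIsolated G) {S : Set V} (hS : IsDomSet G S) :
    totalDomNum G ≤ 2 * S.ncard := by
  choose nb hnb using hiso
  have hT : IsTotalDomSet G (S ∪ nb '' S) := by
    intro y
    by_cases hy : y ∈ S
    · exact ⟨nb y, Or.inr ⟨y, hy, rfl⟩, (hnb y).symm⟩
    · obtain ⟨s, hs, hsy⟩ := hS y hy
      exact ⟨s, Or.inl hs, hsy⟩
  calc totalDomNum G ≤ (S ∪ nb '' S).ncard := totalDomNum_le hT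
    _ ≤ S.ncard + (nb '' S).ncard := Set.ncard_union_le _ _
    _ ≤ 2 * S.ncard := by linarith [Set.ncard_image_le (f := nb) S.toFinite]

lemma IsPacking.two_mul_ncard_le {P T : Set V} (hP : IsPacking G P)
    (hsup : ∀ s ∈ P, IsSupport G s) (hT : IsTotalDomSet G T) : 2 * P.ncard ≤ T.ncard := by
  have hPT : P ⊆ T := fun s hs => by
    obtain ⟨l, hsl, hl⟩ := hsup s hs
    obtain ⟨t, ht, htl⟩ := hT l
    exact hl.eq_of_adj htl.symm hsl.symm ▸ ht
  choose t htT hts using hT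
  have htP : ∀ s ∈ P, t s ∉ P := fun s hs htP =>
    Set.disjoint_left.mp (hP htP hs (hts s).ne) (self_mem_cnbr G _) (mem_cnbr_of_adj (hts s).symm)
  have hinj : Set.InjOn t P := fun s hs s' hs' he => by
    by_contra hne
    exact Set.disjoint_left.mp (hP hs hs' hne) (mem_cnbr_of_adj (hts s).symm)
      (he ▸ mem_cnbr_of_adj (hts s').symm)
  have hdisj : Disjoint P (t '' P) := Set.disjoint_right.mpr fun _ ⟨s, hs, hst⟩ => hst ▸ htP s hs
  calc 2 * P.ncard = (P ∪ t '' P).ncard := by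
        rw [Set.ncard_union_eq hdisj, hinj.ncard_image, two_mul]
    _ ≤ T.ncard := Set.ncard_le_ncard (Set.union_subset hPT (Set.image_subset_iff.mpr
        fun s _ => htT s))

lemma totalDomNum_lt_two_mul {D : Set V} {u t : V} (g : V → V) (hu : u ∈ D)
    (hT : IsTotalDomSet G ((D \ {u}) ∪ g '' (D \ {u}) ∪ {t})) : totalDomNum G < 2 * D.ncard := by
  have hD : (D \ {u}).ncard + 1 = D.ncard := Set.ncard_sdiff_singleton_add_one hu
  calc totalDomNum G ≤ ((D \ {u}) ∪ g '' (D \ {u}) ∪ {t}).ncard := totalDomNum_le hT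
    _ ≤ (D \ {u}).ncard + (g '' (D \ {u})).ncard + 1 := by
        grw [Set.ncard_union_le, Set.ncard_union_le, Set.ncard_singleton]
    _ < 2 * D.ncard := by linarith [Set.ncard_image_le (f := g) (D \ {u}).toFinite]

end Numbers

section MinDomSets

variable {G : SimpleGraph V}

lemma IsDomSet.isTotalDomSet_sdiff_union_image {D : Set V} (hD : IsDomSet G D) {u : V} {g : V → V}
    (hg : ∀ y ∈ D \ {u}, G.Adj (g y) y) (hu : ∃ x ∈ (D \ {u}) ∪ g '' (D \ {u}), G.Adj x u) :
    IsTotalDomSet G ((D \ {u}) ∪ g '' (D \ {u}) ∪ {u}) := by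
  intro y
  obtain ⟨w, hw, hyw⟩ := isDomSet_iff_forall_exists_mem_cnbr.mp hD y
  rcases mem_cnbr.mp hyw with rfl | hwy
  · by_cases hyu : y = u
    · obtain ⟨x, hx, hxu⟩ := hu
      exact ⟨x, Or.inl hx, hyu ▸ hxu⟩
    · exact ⟨g y, Or.inl (Or.inr ⟨y, ⟨hw, hyu⟩, rfl⟩), hg y ⟨hw, hyu⟩⟩
  · by_cases hwu : w = u
    · exact ⟨w, Or.inr hwu, hwy⟩
    · exact ⟨w, Or.inl (Or.inl ⟨hw, hwu⟩), hwy⟩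

lemma IsDomSet.insert_sdiff_singleton_of_isLeaf {D : Set V} (hD : IsDomSet G D) {s l : V}
    (hsl : G.Adj s l) (hl : IsLeaf G l) : IsDomSet G (insert s (D \ {l})) := by
  intro x hx
  simp only [Set.mem_insert_iff, Set.mem_sdiff, Set.mem_singleton_iff, not_or, not_and,
    not_not] at hx
  obtain ⟨hxs, hxD⟩ := hx
  by_cases hxl : x = l
  · exact ⟨s, Set.mem_insert s _, hxl ▸ hsl⟩
  · obtain ⟨w, hw, hwx⟩ := hD x (fun h => hxl (hxD h))
    have hwl : w ≠ l := by
      rintro rfl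
      exact hxs (hl.eq_of_adj hwx hsl.symm)
    exact ⟨w, Or.inr ⟨hw, hwl⟩, hwx⟩

variable [Finite V]

/-- Among γ-sets, one containing the most vertices of `S` contains all of them: otherwise trade
the leaf of a missing support vertex for the support vertex itself. -/
lemma exists_isMinDomSet_superset {S : Set V} (hS : IsSupportChoice G S) :
    ∃ D, IsMinDomSet G D ∧ S ⊆ D := by
  obtain ⟨D, hD, hmax⟩ := Set.exists_max_image {D | IsMinDomSet G D} (fun D => (D ∩ S).ncard)
    (Set.toFinite _) (exists_isMinDomSet G)
  refine ⟨D, hD, fun s hs => ?_⟩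
  by_contra hsD
  obtain ⟨l, hsl, hl⟩ := hS.1 s hs
  have hlD : l ∈ D := by
    by_contra hlD
    obtain ⟨w, hw, hwl⟩ := hD.1 l hlD
    exact hsD (hl.eq_of_adj hwl.symm hsl.symm ▸ hw)
  have hlS : l ∉ S := hS.notMem_of_adj_of_isLeaf hs hsl hl
  set D' := insert s (D \ {l})
  have hD'dom : IsDomSet G D' := hD.1.insert_sdiff_singleton_of_isLeaf hsl hl
  have hD' : IsMinDomSet G D' := by
    refine ⟨hD'dom, le_antisymm ?_ (domNum_le hD'dom)⟩
    rw [← hD.2, Set.ncard_insert_of_notMem (fun h => hsD h.1)]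
    exact (Set.ncard_sdiff_singleton_add_one hlD).le
  have hsub : D ∩ S ⊆ D' ∩ S := fun x ⟨hxD, hxS⟩ =>
    ⟨Or.inr ⟨hxD, fun h => hlS (h ▸ hxS)⟩, hxS⟩
  have hlt : D ∩ S ⊂ D' ∩ S :=
    (Set.ssubset_iff_of_subset hsub).mpr ⟨s, ⟨Set.mem_insert s _, hs⟩, fun h => hsD h.1⟩
  exact (Set.ncard_lt_ncard hlt).not_ge (hmax D' hD')

lemma isPacking_of_totalDomNum_eq (hiso : NoIsolated G) (heq : totalDomNum G = 2 * domNum G)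
    {D : Set V} (hD : IsMinDomSet G D) : IsPacking G D := by
  classical
  intro u hu v hv huv
  by_contra hnd
  obtain ⟨c, hcu, hcv⟩ := Set.not_disjoint_iff.mp hnd
  choose nb hnb using hiso
  suffices ∃ g : V → V, (∀ y ∈ D \ {u}, G.Adj (g y) y) ∧
      ∃ x ∈ (D \ {u}) ∪ g '' (D \ {u}), G.Adj x u by
    obtain ⟨g, hg, hx⟩ := this
    have := totalDomNum_lt_two_mul g hu (hD.1.isTotalDomSet_sdiff_union_image hg hx)
    rw [hD.2] at this
    omega
  by_cases huv' : G.Adj u v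
  · exact ⟨nb, fun y _ => (hnb y).symm, v, Or.inl ⟨hv, huv.symm⟩, huv'.symm⟩
  · have hvc : G.Adj v c := by
      rcases mem_cnbr.mp hcv with rfl | hvc
      · rcases mem_cnbr.mp hcu with h | h
        exacts [(huv h.symm).elim, (huv' h).elim]
      · exact hvc
    have hcu' : G.Adj c u := by
      rcases mem_cnbr.mp hcu with rfl | huc
      · rcases mem_cnbr.mp hcv with h | h
        exacts [(huv h).elim, (huv' h.symm).elim]
      · exact huc.symm
    refine ⟨Function.update nb v c, fun y _ => ?_, c, Or.inr ⟨v, ⟨hv, huv.symm⟩, by simp⟩, hcu'⟩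
    by_cases hyv : y = v
    · subst hyv
      simpa using hvc.symm
    · simpa [hyv] using (hnb y).symm

end MinDomSets

section NonSupportVertex

variable {G : SimpleGraph V}

/-- The 6-cycle `d w' z v z' w` would be induced, where `w'` is a common neighbour of `d` and
`z` missing from `z'`. -/
lemma commonNeighbors_subset_of_not_adj (hC3 : Free (cycleGraph 3) G)
    (hC6 : Free (cycleGraph 6) G) {d v z z' w : V} (hdv : Disjoint (cnbr G d) (cnbr G v))
    (hvz : G.Adj v z) (hvz' : G.Adj v z') (hdw : G.Adj d w) (hz'w : G.Adj z' w)
    (hzw : ¬ G.Adj z w) : G.commonNeighbors d z ⊆ G.commonNeighbors d z' := by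
  intro w' hw'
  rw [mem_commonNeighbors] at hw' ⊢
  obtain ⟨hdw', hzw'⟩ := hw'
  refine ⟨hdw', by_contra fun hz'w' => ?_⟩
  have hfar : ∀ x ∈ cnbr G d, x ∉ cnbr G v := fun _ hx => Set.disjoint_left.mp hdv hx
  have hw'd := mem_cnbr_of_adj hdw'
  refine hC6.false_of_hexagon hdw' hzw'.symm hvz.symm hvz' hz'w hdw.symm
    (fun h => hfar z h (mem_cnbr_of_adj hvz)) (fun h => hfar v h (self_mem_cnbr G v))
    (fun h => hfar z' h (mem_cnbr_of_adj hvz')) (fun h => hfar w' hw'd (mem_cnbr_comm.mp h))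
    ?_ ?_ ?_ ?_ (fun h => hfar w (mem_cnbr_of_adj hdw) h) <;> rw [mem_cnbr] <;> rintro (rfl | h)
  · exact hfar _ hw'd (mem_cnbr_of_adj hvz')
  · exact hz'w' h.symm
  · exact hzw hzw'
  · exact hC3.not_adj_of_adj_of_adj hdw' h hdw
  · exact hzw hz'w
  · exact hC3.not_adj_of_adj_of_adj hvz h hvz'
  · exact hfar _ (mem_cnbr_of_adj hdw) (mem_cnbr_of_adj hvz)
  · exact hzw h

variable [Finite V]

lemma exists_adj_forall_adj_of_disjoint (hC3 : Free (cycleGraph 3) G)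
    (hC6 : Free (cycleGraph 6) G) {d v u : V} (hdv : Disjoint (cnbr G d) (cnbr G v))
    (hvu : G.Adj v u) :
    ∃ z, G.Adj v z ∧ ∀ w, G.Adj d w → ∀ z', G.Adj v z' → G.Adj z' w → G.Adj z w := by
  obtain ⟨z, hvz, hmax⟩ := Set.exists_max_image (G.neighborSet v)
    (fun z => (G.commonNeighbors d z).ncard) (Set.toFinite _) ⟨u, hvu⟩
  refine ⟨z, hvz, fun w hdw z' hvz' hz'w => by_contra fun hzw => ?_⟩
  have hsub := commonNeighbors_subset_of_not_adj hC3 hC6 hdv hvz hvz' hdw hz'w hzw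
  have hlt : G.commonNeighbors d z ⊂ G.commonNeighbors d z' :=
    (Set.ssubset_iff_of_subset hsub).mpr ⟨w, ⟨hdw, hz'w⟩, fun h => hzw h.2⟩
  exact (Set.ncard_lt_ncard hlt).not_ge (hmax z' hvz')

lemma IsPacking.totalDomNum_lt_of_not_isSupport (hiso : NoIsolated G) (hC3 : Free (cycleGraph 3) G)
    (hC6 : Free (cycleGraph 6) G) {D : Set V} (hP : IsPacking G D) (hD : IsDomSet G D) {d : V}
    (hd : d ∈ D) (hns : ¬ IsSupport G d) : totalDomNum G < 2 * D.ncard := by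
  choose nb hnb using hiso
  have hz : ∀ v, ∃ z, G.Adj v z ∧
      (v ∈ D \ {d} → ∀ w, G.Adj d w → ∀ z', G.Adj v z' → G.Adj z' w → G.Adj z w) := fun v => by
    by_cases hv : v ∈ D \ {d}
    · obtain ⟨z, hvz, hz⟩ :=
        exists_adj_forall_adj_of_disjoint hC3 hC6 (hP hd hv.1 (Ne.symm hv.2)) (hnb v)
      exact ⟨z, hvz, fun _ => hz⟩
    · exact ⟨nb v, hnb v, fun h => (hv h).elim⟩
  choose z hvz hz using hz
  refine totalDomNum_lt_two_mul z hd (t := nb d) fun y => ?_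
  obtain ⟨v, hv, hyv⟩ := isDomSet_iff_forall_exists_mem_cnbr.mp hD y
  by_cases hvd : v = d
  · subst hvd
    rcases mem_cnbr.mp hyv with rfl | hvy
    · exact ⟨nb y, Or.inr rfl, (hnb y).symm⟩
    obtain ⟨e, hye, hev⟩ : ∃ e, G.Adj y e ∧ e ≠ v := by
      by_contra! h
      exact hns ⟨y, hvy, v, hvy.symm, h⟩
    obtain ⟨v', hv', hev'⟩ := isDomSet_iff_forall_exists_mem_cnbr.mp hD e
    have hv'v : v' ≠ v := by
      rintro rfl
      rcases mem_cnbr.mp hev' with rfl | hv'e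
      exacts [hev rfl, hC3.not_adj_of_adj_of_adj hvy hye hv'e]
    rcases mem_cnbr.mp hev' with rfl | hv'e
    · exact ⟨e, Or.inl (Or.inl ⟨hv', hv'v⟩), hye.symm⟩
    · exact ⟨z v', Or.inl (Or.inr ⟨v', ⟨hv', hv'v⟩, rfl⟩), hz v' ⟨hv', hv'v⟩ y hvy e hv'e hye.symm⟩
  · rcases mem_cnbr.mp hyv with rfl | hvy
    · exact ⟨z y, Or.inl (Or.inr ⟨y, ⟨hv, hvd⟩, rfl⟩), (hvz y).symm⟩
    · exact ⟨v, Or.inl (Or.inl ⟨hv, hvd⟩), hvy⟩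

end NonSupportVertex

/-- For a `(C₃,C₆)`-free graph `G` with no isolated vertices: `γₜ(G) = 2γ(G)` iff `sup(G)`
is both a packing and a dominating set of `G`. -/
theorem stmt2 {V : Type*} [Fintype V] (G : SimpleGraph V) (hiso : NoIsolated G)
    (hC3 : Free (cycleGraph 3) G) (hC6 : Free (cycleGraph 6) G)
    (S : Set V) (hS : IsSupportChoice G S) :
    totalDomNum G = 2 * domNum G ↔ IsPacking G S ∧ IsDomSet G S := by
  constructor
  · intro heq
    obtain ⟨D, hD, hSD⟩ := exists_isMinDomSet_superset hS
    have hP : IsPacking G D := isPacking_of_totalDomNum_eq hiso heq hD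
    refine ⟨Set.Pairwise.mono hSD hP, isDomSet_iff_forall_exists_mem_cnbr.mpr fun x => ?_⟩
    by_contra! hx
    obtain ⟨d, hd, hxd⟩ := isDomSet_iff_forall_exists_mem_cnbr.mp hD.1 x
    have hdS : d ∉ S := fun h => hx d h hxd
    have hns : ¬ IsSupport G d := fun hsup => by
      obtain ⟨s, hs, hds⟩ := hS.exists_cnbr_subset hsup hdS
      exact hx s hs (hds hxd)
    have := hP.totalDomNum_lt_of_not_isSupport hiso hC3 hC6 hD.1 hd hns
    rw [hD.2] at this
    omega
  · rintro ⟨hP, hdom⟩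
    obtain ⟨D, hD⟩ := exists_isMinDomSet G
    obtain ⟨T, hT, hTcard⟩ := exists_isTotalDomSet_ncard_eq hiso
    have hγ : domNum G = S.ncard := le_antisymm (domNum_le hdom) (hD.2 ▸ hP.ncard_le hD.1)
    rw [hγ]
    exact le_antisymm (totalDomNum_le_two_mul hiso hdom) (hTcard ▸ hP.two_mul_ncard_le hS.1 hT)

end TotalDom
end

section
/- Let G be a finite simple graph with no isolated vertices satisfying γt(G) = 2γ(G), and let S be a subset of V(G). Then S is a minimum dominating set of G if and only if S is both a packing and a dominating set of G. -/
/- A dominating set `S` of a graph without isolated vertices becomes a total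
dominating set once every vertex of `S` is given a neighbour, so `γₜ ≤ 2|S|`; if two members
`u ≠ v` of `S` have a common vertex `w` in their closed neighbourhoods, the single vertex `w`
serves both, giving `γₜ < 2|S|`. Hence when `γₜ = 2γ` every γ-set is a packing. Conversely, a
packing injects into any dominating set (send each vertex to a dominator in its closed
neighbourhood), so a dominating packing has size at most `γ`. -/

open SimpleGraph

namespace TotalDom

variable {V : Type*}

variable {G : SimpleGraph V} {S T D : Set V}

theorem domNum_le_ncard (hS : IsDomSet G S) : domNum G ≤ S.ncard :=
  Nat.sInf_le ⟨S, hS, rfl⟩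

theorem totalDomNum_le_ncard (hT : IsTotalDomSet G T) : totalDomNum G ≤ T.ncard :=
  Nat.sInf_le ⟨T, hT, rfl⟩

theorem isDomSet_univ (G : SimpleGraph V) : IsDomSet G Set.univ :=
  fun v hv => absurd (Set.mem_univ v) hv

theorem exists_isDomSet_ncard_eq_domNum (G : SimpleGraph V) :
    ∃ D : Set V, IsDomSet G D ∧ D.ncard = domNum G :=
  Nat.sInf_mem (s := {n | ∃ S : Set V, IsDomSet G S ∧ S.ncard = n})
    ⟨_, Set.univ, isDomSet_univ G, rfl⟩

theorem IsDomSet.exists_mem_cnbr (hD : IsDomSet G D) (x : V) : ∃ y ∈ D, y ∈ cnbr G x := by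
  by_cases hx : x ∈ D
  · exact ⟨x, hx, Set.mem_insert x _⟩
  · obtain ⟨y, hy, hyx⟩ := hD x hx
    exact ⟨y, hy, Or.inr hyx.symm⟩

theorem IsPacking.ncard_le_of_isDomSet [Finite V] (hS : IsPacking G S) (hD : IsDomSet G D) :
    S.ncard ≤ D.ncard := by
  choose g hgD hg using hD.exists_mem_cnbr
  refine Set.ncard_le_ncard_of_injOn g (fun x _ => hgD x) ?_
  intro x hx y hy hxy
  by_contra hne
  exact Set.disjoint_left.mp (hS hx hy hne) (hg x) (hxy ▸ hg y)

theorem IsDomSet.isTotalDomSet_of_subset (hS : IsDomSet G S) (hST : S ⊆ T)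
    (hT : ∀ x ∈ S, ∃ y ∈ T, G.Adj y x) : IsTotalDomSet G T := by
  intro x
  by_cases hx : x ∈ S
  · exact hT x hx
  · obtain ⟨y, hy, hyx⟩ := hS x hx
    exact ⟨y, hST hy, hyx⟩

theorem exists_adj_of_mem_cnbr_of_mem_cnbr {u v w : V} (huv : u ≠ v) (hwu : w ∈ cnbr G u)
    (hwv : w ∈ cnbr G v) : ∃ y ∈ ({w, v} : Set V), G.Adj y u := by
  rcases hwu with rfl | hwu
  · rcases hwv with rfl | hwv
    · exact absurd rfl huv
    · exact ⟨v, Or.inr rfl, hwv⟩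
  · exact ⟨w, Or.inl rfl, hwu.symm⟩

theorem totalDomNum_lt_two_mul_ncard [Finite V] (hiso : NoIsolated G) (hS : IsDomSet G S)
    {u v : V} (hu : u ∈ S) (hv : v ∈ S) (huv : u ≠ v)
    (hmeet : ¬ Disjoint (cnbr G u) (cnbr G v)) : totalDomNum G < 2 * S.ncard := by
  obtain ⟨w, hwu, hwv⟩ := Set.not_disjoint_iff.mp hmeet
  choose f hf using hiso
  set A := S \ {u, v}
  set T := insert w (S ∪ f '' A)
  have hT : IsTotalDomSet G T := by
    refine hS.isTotalDomSet_of_subset (fun x hx => Or.inr (Or.inl hx)) fun x hx => ?_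
    have hwT : w ∈ T := Set.mem_insert w _
    have hvT : v ∈ T := Or.inr (Or.inl hv)
    have huT : u ∈ T := Or.inr (Or.inl hu)
    by_cases hxu : x = u
    · subst hxu
      obtain ⟨y, rfl | rfl, hy⟩ := exists_adj_of_mem_cnbr_of_mem_cnbr huv hwu hwv
      exacts [⟨_, hwT, hy⟩, ⟨_, hvT, hy⟩]
    by_cases hxv : x = v
    · subst hxv
      obtain ⟨y, rfl | rfl, hy⟩ := exists_adj_of_mem_cnbr_of_mem_cnbr huv.symm hwv hwu
      exacts [⟨_, hwT, hy⟩, ⟨_, huT, hy⟩]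
    have hxA : x ∈ A := Set.mem_sdiff_of_mem hx (by rintro (rfl | rfl) <;> contradiction)
    exact ⟨f x, Or.inr (Or.inr (Set.mem_image_of_mem f hxA)), (hf x).symm⟩
  have hA : A.ncard + 2 = S.ncard := by
    rw [← Set.ncard_pair huv]
    exact Set.ncard_sdiff_add_ncard_of_subset (Set.insert_subset hu (Set.singleton_subset_iff.mpr hv))
  calc totalDomNum G ≤ T.ncard := totalDomNum_le_ncard hT
    _ ≤ S.ncard + A.ncard + 1 :=
      (Set.ncard_insert_le _ _).trans <| Nat.add_le_add_right
        ((Set.ncard_union_le _ _).trans (Nat.add_le_add_left (Set.ncard_image_le) _)) 1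
    _ < 2 * S.ncard := by omega

/-- In a graph `G` with no isolated vertices satisfying `γₜ(G) = 2γ(G)`, a set `S` is a
minimum dominating set iff it is both a packing and a dominating set. -/
theorem stmt4 {V : Type*} [Fintype V] (G : SimpleGraph V) (hiso : NoIsolated G)
    (h : totalDomNum G = 2 * domNum G) (S : Set V) :
    IsMinDomSet G S ↔ IsPacking G S ∧ IsDomSet G S := by
  constructor
  · rintro ⟨hdom, hcard⟩
    refine ⟨fun u hu v hv huv => ?_, hdom⟩
    by_contra hmeet
    have := totalDomNum_lt_two_mul_ncard hiso hdom hu hv huv hmeet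
    omega
  · rintro ⟨hpack, hdom⟩
    obtain ⟨D, hD, hDcard⟩ := exists_isDomSet_ncard_eq_domNum G
    exact ⟨hdom, le_antisymm (hDcard ▸ hpack.ncard_le_of_isDomSet hD) (domNum_le_ncard hdom)⟩

end TotalDom
end
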